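/- arXiv:2111.02746 — 2 statements merged into one kernel-verified Lean document; each statement's English description precedes it below -/
import Mathlib

section
/- Let n ≥ 2000 and let k = min{ j ∈ ℤ⁺ : 3^j ≥ √n }. Suppose m = δ·p^r with √n < m < 3^k, where δ ≥ 4 is an integer, p ≥ 5 is a prime, r is a positive integer, p ∤ δ and p^r ≥ 11. Then there exist integers 1 ≤ a < b ≤ n such that b³ + b ≡ a³ + a (mod m²). -/
/-!
Take `b = a + c`. Since `b³ + b - (a³ + a) = c (3a² + 3ca + c² + 1)`, it suffices to have
`δ² ∣ c` and `p^(2r) ∣ q_c(a) := 3a² + 3ca + c² + 1`. The discriminant of `q_c` is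
`-3(c² + 4)`, and counting values of quadratics over `𝔽_p` shows that it is a nonzero square
for some residue `c mod p`; as `δ` is a unit mod `p`, that residue has a representative
`c ∈ δ² · [1, p]`. Then `q_c` has a simple root mod `p`, which Hensel's lemma lifts to a root
`a ∈ [1, p^(2r)]` mod `p^(2r)`. Finally `b ≤ p^(2r) + δ² p^r ≤ n`: minimality of `k` gives
`m < 3√n`, i.e. `m² < 9n`, which suffices unless `δ` and `p^r` are so small that the bound is
below `2000`.
-/

open Polynomial

namespace Polynomial

variable {R : Type*} [CommRing R] (f : R[X]) {p a : R}

theorem exists_dvd_sub_pow_add_two_dvd_eval {j : ℕ} (hfa : p ^ (j + 1) ∣ f.eval a)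
    (hf'a : IsCoprime (f.derivative.eval a) p) :
    ∃ b, p ∣ b - a ∧ p ^ (j + 2) ∣ f.eval b := by
  obtain ⟨s, hs⟩ := hfa
  obtain ⟨x, y, hxy⟩ := hf'a
  -- Newton step: `b = a - f(a) f'(a)⁻¹`, with `x` an inverse of `f'(a)` modulo `p`.
  obtain ⟨k, hk⟩ := f.binomExpansion a (-(s * x) * p ^ (j + 1))
  refine ⟨a + -(s * x) * p ^ (j + 1), ⟨-(s * x) * p ^ j, by ring⟩,
    ⟨s * y + k * (s * x) ^ 2 * p ^ j, ?_⟩⟩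
  rw [hk, hs]
  linear_combination (-(p ^ (j + 1) * s)) * hxy

theorem exists_dvd_sub_pow_dvd_eval (hfa : p ∣ f.eval a)
    (hf'a : IsCoprime (f.derivative.eval a) p) (j : ℕ) :
    ∃ b, p ∣ b - a ∧ p ^ j ∣ f.eval b := by
  suffices h : ∃ b, p ∣ b - a ∧ p ^ (j + 1) ∣ f.eval b by
    obtain ⟨b, hba, hb⟩ := h
    exact ⟨b, hba, (pow_dvd_pow p j.le_succ).trans hb⟩
  induction j with
  | zero => exact ⟨a, by simp, by simpa using hfa⟩
  | succ j ih =>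
    obtain ⟨b, hba, hb⟩ := ih
    have hf'b : IsCoprime (f.derivative.eval b) p := by
      obtain ⟨q, hq⟩ := hba.trans (sub_dvd_eval_sub b a f.derivative)
      rw [sub_eq_iff_eq_add'.mp hq]
      exact hf'a.add_mul_left_left q
    obtain ⟨b', hb'b, hb'⟩ := f.exists_dvd_sub_pow_add_two_dvd_eval hb hf'b
    exact ⟨b', by simpa using dvd_add hb'b hba, hb'⟩

end Polynomial

theorem ZMod.exists_mem_Icc_natCast_eq (n : ℕ) [NeZero n] (x : ZMod n) :
    ∃ t ∈ Set.Icc 1 n, (t : ZMod n) = x := by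
  by_cases hx : x = 0
  · exact ⟨n, ⟨NeZero.one_le, le_rfl⟩, by rw [ZMod.natCast_self, hx]⟩
  · exact ⟨x.val, ⟨Nat.one_le_iff_ne_zero.mpr ((ZMod.val_ne_zero x).mpr hx), x.val_lt.le⟩,
      ZMod.natCast_zmod_val x⟩

theorem exists_mem_Icc_dvd_eval (f : ℤ[X]) (N : ℕ) [NeZero N] {b : ℤ}
    (hb : (N : ℤ) ∣ f.eval b) : ∃ a ∈ Set.Icc 1 N, (N : ℤ) ∣ f.eval (a : ℤ) := by
  obtain ⟨a, ha, hab⟩ := ZMod.exists_mem_Icc_natCast_eq N b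
  have hba : (N : ℤ) ∣ b - a :=
    (ZMod.intCast_eq_intCast_iff_dvd_sub _ _ _).mp (by exact_mod_cast hab)
  refine ⟨a, ha, ?_⟩
  simpa only [sub_sub_cancel] using dvd_sub hb (hba.trans (sub_dvd_eval_sub b a f))

theorem FiniteField.exists_sq_eq_neg_three_mul_sq_add_four {K : Type*} [Field K] [Fintype K]
    (hK : ringChar K ≠ 2) (h3 : (3 : K) ≠ 0) :
    ∃ u v : K, v ≠ 0 ∧ v ^ 2 = -3 * (u ^ 2 + 4) := by
  obtain ⟨u, v, huv⟩ := exists_root_sum_quadratic (f := C 3 * X ^ 2 + C 0 * X + C 12)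
    (g := X ^ 2) (degree_quadratic h3) (degree_X_pow 2) (odd_card_of_char_ne_two hK)
  simp only [eval_add, eval_mul, eval_pow, eval_C, eval_X, zero_mul, add_zero] at huv
  by_cases hv : v = 0
  · -- then `u² = -4`, and `(u / 2, 3u / 2)` works instead
    have h2 : (2 : K) ≠ 0 := Ring.two_ne_zero hK
    have hu2 : u ^ 2 = -4 := by
      subst hv
      have : (3 : K) * (u ^ 2 + 4) = 0 := by linear_combination huv
      linear_combination (mul_eq_zero.mp this).resolve_left h3
    have hu : u ≠ 0 := by
      rintro rfl
      exact h2 (pow_eq_zero_iff two_ne_zero |>.mp (by linear_combination hu2))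
    refine ⟨u / 2, 3 * (u / 2), mul_ne_zero h3 (div_ne_zero hu h2), ?_⟩
    field_simp
    linear_combination 4 * hu2
  · exact ⟨u, v, hv, by linear_combination huv⟩

noncomputable def collisionQuadratic {R : Type*} [CommRing R] (c : R) : R[X] :=
  C 3 * X ^ 2 + C (3 * c) * X + C (c ^ 2 + 1)

section collisionQuadratic

variable {R : Type*} [CommRing R] (c x : R)

@[simp]
theorem eval_collisionQuadratic :
    (collisionQuadratic c).eval x = 3 * x ^ 2 + 3 * c * x + (c ^ 2 + 1) := by
  simp [collisionQuadratic]

@[simp]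
theorem eval_derivative_collisionQuadratic :
    (collisionQuadratic c).derivative.eval x = 6 * x + 3 * c := by
  simp only [collisionQuadratic, derivative_add, derivative_C_mul_X_pow, derivative_C_mul_X,
    derivative_C, eval_add, eval_C, eval_mul, eval_pow, eval_X, add_zero]
  ring

theorem map_collisionQuadratic {S : Type*} [CommRing S] (φ : R →+* S) :
    (collisionQuadratic c).map φ = collisionQuadratic (φ c) := by
  simp [collisionQuadratic, map_ofNat]

theorem add_pow_three_add_sub_pow_three_add :
    (x + c) ^ 3 + (x + c) - (x ^ 3 + x) = c * (collisionQuadratic c).eval x := by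
  simp only [eval_collisionQuadratic]
  ring

end collisionQuadratic

theorem FiniteField.exists_isRoot_collisionQuadratic {K : Type*} [Field K] [Fintype K]
    (hK : ringChar K ≠ 2) (h3 : (3 : K) ≠ 0) :
    ∃ u α : K,
      (collisionQuadratic u).IsRoot α ∧ (collisionQuadratic u).derivative.eval α ≠ 0 := by
  obtain ⟨u, v, hv, huv⟩ := exists_sq_eq_neg_three_mul_sq_add_four hK h3
  have h6 : (6 : K) ≠ 0 := by
    simpa [show (6 : K) = 2 * 3 by norm_num] using ⟨Ring.two_ne_zero hK, h3⟩
  -- `12 · q_u(α) = (6α + 3u)² + 3(u² + 4)`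
  refine ⟨u, (v - 3 * u) / 6, ?_, ?_⟩
  · have h12 : (12 : K) ≠ 0 := by
      simpa [show (12 : K) = 2 * 6 by norm_num] using ⟨Ring.two_ne_zero hK, h6⟩
    rw [IsRoot, eval_collisionQuadratic, ← mul_right_inj' h12]
    field_simp
    linear_combination 3 * huv
  · rw [eval_derivative_collisionQuadratic]
    field_simp
    simpa using hv

theorem exists_collisionQuadratic_simple_root_mod_prime {p δ : ℕ} [Fact p.Prime] (hp5 : 5 ≤ p)
    (hpδ : ¬ p ∣ δ) :
    ∃ c : ℕ, 0 < c ∧ c ≤ δ ^ 2 * p ∧ δ ^ 2 ∣ c ∧ ∃ a : ℤ,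
      (p : ℤ) ∣ (collisionQuadratic (c : ℤ)).eval a ∧
      IsCoprime ((collisionQuadratic (c : ℤ)).derivative.eval a) p := by
  have h3 : (3 : ZMod p) ≠ 0 := by
    rw [← Nat.cast_ofNat, Ne, ZMod.natCast_eq_zero_iff]
    exact fun h => by have := Nat.le_of_dvd three_pos h; omega
  obtain ⟨u, α, hα, hα'⟩ := FiniteField.exists_isRoot_collisionQuadratic
    (by rw [ZMod.ringChar_zmod_n]; omega) h3
  have hδ : (δ : ZMod p) ≠ 0 := by rwa [Ne, ZMod.natCast_eq_zero_iff]
  obtain ⟨t, ⟨ht1, htp⟩, ht⟩ := ZMod.exists_mem_Icc_natCast_eq p (u / δ ^ 2)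
  have hmap : (collisionQuadratic ((δ ^ 2 * t : ℕ) : ℤ)).map (Int.castRingHom (ZMod p)) =
      collisionQuadratic u := by
    rw [map_collisionQuadratic, eq_intCast]
    congr 1
    push_cast [ht]
    field_simp
  obtain ⟨a, rfl⟩ := ZMod.intCast_surjective α
  have hcast (g : ℤ[X]) :
      ((g.eval a : ℤ) : ZMod p) = (g.map (Int.castRingHom _)).eval (a : ZMod p) := by
    rw [eval_intCast_map, eq_intCast, Int.cast_id]
  have hδ0 : 0 < δ := Nat.pos_of_ne_zero (by rintro rfl; exact hpδ (dvd_zero p))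
  refine ⟨δ ^ 2 * t, Nat.mul_pos (by positivity) ht1, Nat.mul_le_mul_left _ htp,
    dvd_mul_right _ _, a, ?_, ?_⟩
  · rw [← ZMod.intCast_zmod_eq_zero_iff_dvd, hcast, hmap]
    exact hα
  · rw [isCoprime_comm, (Nat.prime_iff_prime_int.mp Fact.out).coprime_iff_not_dvd,
      ← ZMod.intCast_zmod_eq_zero_iff_dvd, hcast, ← derivative_map, hmap]
    exact hα'

theorem add_pow_three_add_modEq {d M a c : ℕ} (hdc : d ∣ c)
    (hM : (M : ℤ) ∣ (collisionQuadratic (c : ℤ)).eval (a : ℤ)) :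
    (a + c) ^ 3 + (a + c) ≡ a ^ 3 + a [MOD d * M] := by
  refine (Nat.modEq_iff_dvd.mpr ?_).symm
  push_cast
  rw [add_pow_three_add_sub_pow_three_add]
  exact mul_dvd_mul (Int.natCast_dvd_natCast.mpr hdc) hM

theorem sq_lt_nine_mul_of_lt_three_pow {n k m : ℕ} (hn : 1 ≤ n)
    (hk : IsLeast {j : ℕ | 1 ≤ j ∧ Real.sqrt n ≤ 3 ^ j} k) (hm : m < 3 ^ k) :
    m ^ 2 < 9 * n := by
  have hmn : (m / 3 : ℝ) < Real.sqrt n := by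
    rcases Nat.lt_or_ge k 2 with hk2 | hk2
    · have hk1 : k = 1 := by have := hk.1.1; omega
      subst hk1
      have h1 : (1 : ℝ) ≤ Real.sqrt n := Real.one_le_sqrt.mpr (by exact_mod_cast hn)
      have : (m : ℝ) < 3 := by exact_mod_cast hm
      linarith
    · have hprev : (3 : ℝ) ^ (k - 1) < Real.sqrt n := by
        by_contra! h
        have := hk.2 ⟨by omega, h⟩
        omega
      have : (m : ℝ) < 3 * 3 ^ (k - 1) := by
        rw [← pow_succ', Nat.sub_add_cancel (by omega)]
        exact_mod_cast hm
      linarith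
  have := (Real.lt_sqrt (by positivity)).mp hmn
  have : (m : ℝ) ^ 2 < 9 * n := by linarith
  exact_mod_cast this

theorem sq_add_mul_le_of_mul_sq_lt {D P n : ℕ} (hD : 16 ≤ D) (hP : 11 ≤ P) (hn : 2000 ≤ n)
    (h : D * P ^ 2 < 9 * n) : P ^ 2 + D * P ≤ n := by
  by_cases hlarge : 9 * (P ^ 2 + D * P) ≤ D * P ^ 2
  · omega
  · -- otherwise `(D - 9)(P - 9) < 81`
    have hsmall : D * P < 9 * P + 9 * D := by
      by_contra! h'
      exact hlarge (by nlinarith)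
    have hD63 : D ≤ 63 := by nlinarith
    have hP20 : P ≤ 20 := by nlinarith
    have : P ^ 2 + D * P ≤ 20 ^ 2 + 63 * 20 := by gcongr
    omega

theorem collision_case_vi_general (n : ℕ) (hn : 2000 ≤ n) (k : ℕ)
    (hk : IsLeast {j : ℕ | 1 ≤ j ∧ Real.sqrt n ≤ 3 ^ j} k)
    (m δ r p : ℕ) (hp : p.Prime) (hp5 : 5 ≤ p) (hδ : 4 ≤ δ) (hr : 1 ≤ r)
    (hpδ : ¬ p ∣ δ) (hpr : 11 ≤ p ^ r) (hm : m = δ * p ^ r)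
    (hm2 : m < 3 ^ k) :
    ∃ a b : ℕ, 1 ≤ a ∧ a < b ∧ b ≤ n ∧ b ^ 3 + b ≡ a ^ 3 + a [MOD m ^ 2] := by
  have : Fact p.Prime := ⟨hp⟩
  obtain ⟨c, hc0, hcp, hδc, a₀, hroot, hsimple⟩ :=
    exists_collisionQuadratic_simple_root_mod_prime hp5 hpδ
  obtain ⟨b, -, hb⟩ :=
    (collisionQuadratic (c : ℤ)).exists_dvd_sub_pow_dvd_eval hroot hsimple (2 * r)
  obtain ⟨a, ⟨ha1, haM⟩, ha⟩ :=
    exists_mem_Icc_dvd_eval _ (p ^ (2 * r)) (by exact_mod_cast hb)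
  refine ⟨a, a + c, ha1, Nat.lt_add_of_pos_right hc0, ?_, ?_⟩
  · calc a + c ≤ (p ^ r) ^ 2 + δ ^ 2 * p ^ r := by
          gcongr
          · rwa [← pow_mul, mul_comm]
          · exact hcp.trans (Nat.mul_le_mul_left _ (Nat.le_self_pow (by omega) p))
      _ ≤ n := by
          refine sq_add_mul_le_of_mul_sq_lt (by nlinarith) hpr hn ?_
          rw [← mul_pow, ← hm]
          exact sq_lt_nine_mul_of_lt_three_pow (by omega) hk hm2
  · rw [hm, mul_pow, ← pow_mul, mul_comm r 2]
    exact add_pow_three_add_modEq hδc ha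

/-- Case (vi): `n ≥ 2000`, `√n < m < 3^k`, `m = δ·p^r` with `δ ≥ 4`, `p ≥ 5` prime,
`r ≥ 1`, `p ∤ δ` and `p^r ≥ 11`.  Then there exist `1 ≤ a < b ≤ n` with
`b³ + b ≡ a³ + a (mod m²)`. -/
theorem collision_case_vi (n : ℕ) (hn : 2000 ≤ n) (k : ℕ)
    (hk : IsLeast {j : ℕ | 1 ≤ j ∧ Real.sqrt n ≤ 3 ^ j} k)
    (m δ r p : ℕ) (hp : p.Prime) (hp5 : 5 ≤ p) (hδ : 4 ≤ δ) (hr : 1 ≤ r)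
    (hpδ : ¬ p ∣ δ) (hpr : 11 ≤ p ^ r) (hm : m = δ * p ^ r)
    (hm1 : Real.sqrt n < m) (hm2 : m < 3 ^ k) :
    ∃ a b : ℕ, 1 ≤ a ∧ a < b ∧ b ≤ n ∧ b ^ 3 + b ≡ a ^ 3 + a [MOD m ^ 2] :=
  collision_case_vi_general n hn k hk m δ r p hp hp5 hδ hr hpδ hpr hm hm2
end

section
/- Let n ≥ 100 and let k = min{ j ∈ ℤ⁺ : 3^j ≥ √n }. Suppose m satisfies √n < m < 3^k and m = δ·p^r, where 1 ≤ δ ≤ 3, p is a prime with p ≡ 1 (mod 3), and r is a positive integer. Then there exist integers 1 ≤ a < b ≤ n such that b³ + b ≡ a³ + a (mod m²). -/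
/-!
Since `p ≡ 1 (mod 3)`, `ZMod p` contains a primitive cube root of unity `ω`, and `(2ω + 1)/3`
is a root of `3X² + 1`; as `p ∤ 6`, Hensel's lemma lifts it to `s` with `p^r ∣ 3s² + 1`.
The identity `(a + d)³ + (a + d) - (a³ + a) = d (3a² + 1 + d (3a + d))` then gives collisions
modulo `m²` with shift `d = m` for `δ ∈ {1, 2}` (taking `a` odd when `δ = 2`) and `d = 3m` for
`δ = 3`. Minimality of `k` gives `m < 3√n`, so `a + d ≤ 10m/3 < 10√n ≤ n`.
-/

theorem ZMod.exists_three_mul_sq_add_one_eq_zero {p : ℕ} [hp : Fact p.Prime] (hp3 : p % 3 = 1) :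
    ∃ x : ZMod p, 3 * x ^ 2 + 1 = 0 := by
  have : Fact (Nat.Prime 3) := ⟨Nat.prime_three⟩
  obtain ⟨ω, hω⟩ := exists_prime_orderOf_dvd_card (G := (ZMod p)ˣ) 3
    (by rw [ZMod.card_units]; omega)
  have hζ : IsPrimitiveRoot (ω : ZMod p) 3 :=
    IsPrimitiveRoot.coe_units_iff.mpr (hω ▸ IsPrimitiveRoot.orderOf ω)
  have hcyc := hζ.geom_sum_eq_zero (by norm_num)
  simp only [Finset.sum_range_succ, Finset.sum_range_zero] at hcyc
  have h3 : ((3 : ℕ) : ZMod p) ≠ 0 := by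
    rw [Ne, ZMod.natCast_eq_zero_iff, Nat.prime_dvd_prime_iff_eq hp.out Nat.prime_three]
    omega
  push_cast at h3
  exact ⟨(2 * ω + 1) / 3, by field_simp; linear_combination 4 * hcyc⟩

open Polynomial in
theorem exists_dvd_three_mul_sq_add_one_of_coprime {p s : ℕ} [Fact p.Prime]
    (hs : p ∣ 3 * s ^ 2 + 1) (hcop : p.Coprime (6 * s)) (r : ℕ) :
    ∃ t : ℕ, p ^ r ∣ 3 * t ^ 2 + 1 := by
  set F : ℤ[X] := 3 * X ^ 2 + 1
  have hFs : F.aeval (s : ℤ_[p]) = ((3 * s ^ 2 + 1 : ℕ) : ℤ_[p]) := by simp [F, map_ofNat]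
  have hF's : F.derivative.aeval (s : ℤ_[p]) = ((6 * s : ℕ) : ℤ_[p]) := by
    simp [F, map_ofNat, ← mul_assoc, show (3 : ℤ_[p]) * 2 = 6 by norm_num]
  obtain ⟨z, hz, -⟩ := hensels_lemma (F := F) (a := s) (by
    rw [hFs, hF's, PadicInt.norm_natCast_eq_one_iff.mpr hcop, one_pow]
    exact PadicInt.norm_natCast_lt_one_iff.mpr hs)
  refine ⟨(PadicInt.toZModPow r z).val, (ZMod.natCast_eq_zero_iff _ _).mp ?_⟩
  simpa [F, map_ofNat] using congrArg (PadicInt.toZModPow r) hz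

theorem exists_dvd_three_mul_sq_add_one {p : ℕ} (hp : p.Prime) (hp3 : p % 3 = 1) (r : ℕ) :
    ∃ s : ℕ, p ^ r ∣ 3 * s ^ 2 + 1 := by
  have : Fact p.Prime := ⟨hp⟩
  obtain ⟨x, hx⟩ := ZMod.exists_three_mul_sq_add_one_eq_zero hp3
  refine exists_dvd_three_mul_sq_add_one_of_coprime (s := x.val) ?_ ?_ r
  · rw [← ZMod.natCast_eq_zero_iff]; simpa using hx
  · rw [hp.coprime_iff_not_dvd, ← ZMod.natCast_eq_zero_iff]
    intro h6
    have h2 : ((2 : ℕ) : ZMod p) = 0 := by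
      push_cast [ZMod.natCast_zmod_val] at h6 ⊢
      linear_combination 2 * hx - x * h6
    rw [ZMod.natCast_eq_zero_iff, Nat.prime_dvd_prime_iff_eq hp Nat.prime_two] at h2
    omega

theorem exists_pos_lt_dvd_three_mul_sq_add_one {q s : ℕ} (hq : 1 < q) (hs : q ∣ 3 * s ^ 2 + 1) :
    ∃ a, 0 < a ∧ a < q ∧ q ∣ 3 * a ^ 2 + 1 := by
  have hmod : q ∣ 3 * (s % q) ^ 2 + 1 := Nat.modEq_zero_iff_dvd.mp <|
    (((Nat.mod_modEq s q).pow 2).mul_left 3).add_right 1 |>.trans (Nat.modEq_zero_iff_dvd.mpr hs)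
  refine ⟨s % q, Nat.pos_of_ne_zero fun h0 => ?_, Nat.mod_lt s (by omega), hmod⟩
  rw [h0] at hmod
  exact absurd (Nat.le_of_dvd one_pos (by simpa using hmod)) (by omega)

theorem exists_pos_lt_two_mul_dvd_three_mul_sq_add_one {q a : ℕ} (hq : Odd q) (ha : 0 < a)
    (haq : a < q) (hdvd : q ∣ 3 * a ^ 2 + 1) :
    ∃ b, 0 < b ∧ b < 2 * q ∧ 2 * q ∣ 3 * b ^ 2 + 1 := by
  obtain ⟨b, hb0, hbq, hbodd, hbdvd⟩ :
      ∃ b, 0 < b ∧ b < 2 * q ∧ Odd b ∧ q ∣ 3 * b ^ 2 + 1 := by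
    rcases Nat.even_or_odd a with hae | hao
    · refine ⟨a + q, by omega, by omega, hae.add_odd hq, ?_⟩
      have : 3 * (a + q) ^ 2 + 1 = 3 * a ^ 2 + 1 + q * (6 * a + 3 * q) := by ring
      rw [this]
      exact hdvd.add (dvd_mul_right _ _)
    · exact ⟨a, ha, by omega, hao, hdvd⟩
  have htwo : 2 ∣ 3 * b ^ 2 + 1 := (Nat.odd_mul.mpr ⟨by decide, hbodd.pow⟩).add_one.two_dvd
  exact ⟨b, hb0, hbq, (Nat.coprime_two_left.mpr hq).mul_dvd_of_dvd_of_dvd htwo hbdvd⟩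

theorem add_pow_three_add_self_modEq {q d a M : ℕ} (hqd : q ∣ d) (hq : q ∣ 3 * a ^ 2 + 1)
    (hM : M ∣ d * q) : (a + d) ^ 3 + (a + d) ≡ a ^ 3 + a [MOD M] := by
  have hsplit : (a + d) ^ 3 + (a + d) = a ^ 3 + a + d * (3 * a ^ 2 + 1 + d * (3 * a + d)) := by
    ring
  have hdvd : M ∣ d * (3 * a ^ 2 + 1 + d * (3 * a + d)) :=
    hM.trans (mul_dvd_mul_left d (hq.add (hqd.mul_right _)))
  rw [hsplit]
  simpa using (Nat.modEq_zero_iff_dvd.mpr hdvd).add_left (a ^ 3 + a)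

theorem pow_lt_mul_of_isLeast {b x : ℝ} (hb : 0 < b) (hx : b < x) {k : ℕ}
    (hk : IsLeast {j : ℕ | 1 ≤ j ∧ x ≤ b ^ j} k) : b ^ k < b * x := by
  obtain ⟨⟨hk1, hxk⟩, hmin⟩ := hk
  have hk2 : 2 ≤ k := by
    by_contra h
    obtain rfl : k = 1 := by omega
    linarith [pow_one b]
  have hpred : b ^ (k - 1) < x := by
    by_contra h
    have := hmin ⟨by omega, not_lt.mp h⟩
    omega
  calc b ^ k = b * b ^ (k - 1) := by rw [← pow_succ', Nat.sub_add_cancel (by omega)]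
    _ < b * x := by gcongr

theorem le_of_three_mul_le_ten_mul {n m c : ℕ} (h10 : 10 ≤ √(n : ℝ))
    (hm : (m : ℝ) < 3 * √n) (hc : 3 * c ≤ 10 * m) : c ≤ n := by
  have hc' : (3 * c : ℝ) ≤ 10 * m := by exact_mod_cast hc
  have : (c : ℝ) ≤ n := by nlinarith [Real.mul_self_sqrt (Nat.cast_nonneg (α := ℝ) n)]
  exact_mod_cast this

theorem exists_shift_modEq_sq {p r δ : ℕ} (hp : p.Prime) (hp3 : p % 3 = 1) (hr : 1 ≤ r)
    (hδ1 : 1 ≤ δ) (hδ3 : δ ≤ 3) :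
    ∃ a d, 0 < a ∧ 0 < d ∧ 3 * (a + d) ≤ 10 * (δ * p ^ r) ∧
      (a + d) ^ 3 + (a + d) ≡ a ^ 3 + a [MOD (δ * p ^ r) ^ 2] := by
  set q := p ^ r
  have hq : 1 < q := Nat.one_lt_pow (by omega) hp.one_lt
  obtain ⟨s, hs⟩ := exists_dvd_three_mul_sq_add_one hp hp3 r
  obtain ⟨a, ha0, haq, hdvd⟩ := exists_pos_lt_dvd_three_mul_sq_add_one hq hs
  interval_cases δ
  · exact ⟨a, q, ha0, by omega, by omega,
      add_pow_three_add_self_modEq dvd_rfl hdvd (by rw [one_mul, sq])⟩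
  · obtain ⟨b, hb0, hbq, hbdvd⟩ := exists_pos_lt_two_mul_dvd_three_mul_sq_add_one
      (hp.odd_of_ne_two (by omega)).pow ha0 haq hdvd
    exact ⟨b, 2 * q, hb0, by omega, by omega,
      add_pow_three_add_self_modEq dvd_rfl hbdvd (by rw [sq])⟩
  · -- `3 ∤ 3a² + 1`, so the shift alone has to carry the factor `9` of `m²`.
    exact ⟨a, 9 * q, ha0, by omega, by omega,
      add_pow_three_add_self_modEq (dvd_mul_left q 9) hdvd ⟨1, by ring⟩⟩

theorem collision_case_i_one_mod_three_general (n : ℕ) (hn : 100 ≤ n) (k : ℕ)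
    (hk : IsLeast {j : ℕ | 1 ≤ j ∧ Real.sqrt n ≤ 3 ^ j} k)
    (m δ r p : ℕ) (hp : p.Prime) (hp3 : p % 3 = 1)
    (hδ1 : 1 ≤ δ) (hδ3 : δ ≤ 3) (hr : 1 ≤ r) (hm : m = δ * p ^ r)
    (hm2 : m < 3 ^ k) :
    ∃ a b : ℕ, 1 ≤ a ∧ a < b ∧ b ≤ n ∧ b ^ 3 + b ≡ a ^ 3 + a [MOD m ^ 2] := by
  have h10 : (10 : ℝ) ≤ √n := Real.le_sqrt_of_sq_le (by norm_cast)
  have hm3 : (m : ℝ) < 3 * √n :=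
    calc (m : ℝ) < 3 ^ k := by exact_mod_cast hm2
      _ < 3 * √n := pow_lt_mul_of_isLeast (by norm_num) (by linarith) hk
  obtain ⟨a, d, ha, hd, hbound, hmod⟩ := exists_shift_modEq_sq hp hp3 hr hδ1 hδ3
  rw [← hm] at hbound hmod
  exact ⟨a, a + d, ha, by omega, le_of_three_mul_le_ten_mul h10 hm3 hbound, hmod⟩

/-- `n ≥ 100`, `√n < m < 3^k`, and `m = δ·p^r` with `1 ≤ δ ≤ 3`, `p ≡ 1 (mod 3)` prime and
`r ≥ 1`.  Then there exist `1 ≤ a < b ≤ n` with `b³ + b ≡ a³ + a (mod m²)`. -/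
theorem collision_case_i_one_mod_three (n : ℕ) (hn : 100 ≤ n) (k : ℕ)
    (hk : IsLeast {j : ℕ | 1 ≤ j ∧ Real.sqrt n ≤ 3 ^ j} k)
    (m δ r p : ℕ) (hp : p.Prime) (hp3 : p % 3 = 1)
    (hδ1 : 1 ≤ δ) (hδ3 : δ ≤ 3) (hr : 1 ≤ r) (hm : m = δ * p ^ r)
    (hm1 : Real.sqrt n < m) (hm2 : m < 3 ^ k) :
    ∃ a b : ℕ, 1 ≤ a ∧ a < b ∧ b ≤ n ∧ b ^ 3 + b ≡ a ^ 3 + a [MOD m ^ 2] :=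
  collision_case_i_one_mod_three_general n hn k hk m δ r p hp hp3 hδ1 hδ3 hr hm hm2
end
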